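/- arXiv:2403.03085 — 3 statements merged into one kernel-verified Lean document; each statement's English description precedes it below -/
import Mathlib

section
/- Let (F,G,ζ) be a left loose morphism of adjunctions from (L,R,η,ε) to (L',R',η',ε'). Setting θ := (L'ζ♯) ∘ (ζ⁻¹R) : FLR ⇒ L'R'F, the pair (F,θ) is a lax morphism of comonads from the comonad (LR, ε, LηR) to the comonad (L'R', ε', L'η'R'), i.e. θ is compatible with both counits and comultiplications. -/
/-
All three laws are read off the three defining properties of the mate `ζ♯` (Mathlib's
`mateEquiv` applied to `ζ`): its naturality, `(ζ♯L)(Gη) = (R'ζ)(η'G)` and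
`(ε'F)(L'ζ♯) = (Fε)(ζR)`. The counit law is the last one after cancelling `ζ⁻¹ζ`. For the
comultiplication, the second one says that `(R'ζ⁻¹R)(ζ♯LR)(GηR) = η'GR`; combined with naturality
of `η'` and of `ζ⁻¹` this turns `(L'η'R'F)θ` into `(L'R'θ)(θLR)(FLηR)`.
-/

open CategoryTheory

variable {C D C' D' : Type*} [Category C] [Category D] [Category C'] [Category D']

/-- The component at `X : C` of the mate `ζ♯ = (R'Fε)(R'ζR)(η'GR) : GR ⇒ R'F` of a natural
isomorphism `ζ : L'G ≅ FL` for a left loose morphism of adjunctions `(F, G, ζ)`. -/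
def mateApp {L : D ⥤ C} {R : C ⥤ D} (adj : L ⊣ R)
    {L' : D' ⥤ C'} {R' : C' ⥤ D'} (adj' : L' ⊣ R')
    {F : C ⥤ C'} {G : D ⥤ D'} (ζ : G ⋙ L' ≅ L ⋙ F) (X : C) :
    G.obj (R.obj X) ⟶ R'.obj (F.obj X) :=
  adj'.unit.app (G.obj (R.obj X)) ≫ R'.map (ζ.hom.app (R.obj X)) ≫
    R'.map (F.map (adj.counit.app X))

/-- The component at `E : C` of `θ := (L'ζ♯) ∘ (ζ⁻¹R) : FLR ⇒ L'R'F`. -/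
def thetaApp {L : D ⥤ C} {R : C ⥤ D} (adj : L ⊣ R)
    {L' : D' ⥤ C'} {R' : C' ⥤ D'} (adj' : L' ⊣ R')
    {F : C ⥤ C'} {G : D ⥤ D'} (ζ : G ⋙ L' ≅ L ⋙ F) (E : C) :
    F.obj (L.obj (R.obj E)) ⟶ L'.obj (R'.obj (F.obj E)) :=
  ζ.inv.app (R.obj E) ≫ L'.map (mateApp adj adj' ζ E)

section

variable {L : D ⥤ C} {R : C ⥤ D} (adj : L ⊣ R) {L' : D' ⥤ C'} {R' : C' ⥤ D'} (adj' : L' ⊣ R')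
  {F : C ⥤ C'} {G : D ⥤ D'} (ζ : G ⋙ L' ≅ L ⋙ F)

theorem mateApp_eq_mateEquiv_app (X : C) :
    mateApp adj adj' ζ X = (mateEquiv adj adj' (TwoSquare.mk _ _ _ _ ζ.hom)).app X := by
  simp [mateApp]

theorem mateApp_naturality {X Y : C} (f : X ⟶ Y) :
    G.map (R.map f) ≫ mateApp adj adj' ζ Y = mateApp adj adj' ζ X ≫ R'.map (F.map f) := by
  simp only [mateApp_eq_mateEquiv_app]
  exact (mateEquiv adj adj' (TwoSquare.mk _ _ _ _ ζ.hom)).naturality f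

theorem unit_comp_mateApp (Y : D) :
    G.map (adj.unit.app Y) ≫ mateApp adj adj' ζ (L.obj Y) =
      adj'.unit.app (G.obj Y) ≫ R'.map (ζ.hom.app Y) := by
  rw [mateApp_eq_mateEquiv_app]
  exact unit_mateEquiv adj adj' (TwoSquare.mk _ _ _ _ ζ.hom) Y

theorem map_mateApp_comp_counit (X : C) :
    L'.map (mateApp adj adj' ζ X) ≫ adj'.counit.app (F.obj X) =
      ζ.hom.app (R.obj X) ≫ F.map (adj.counit.app X) := by
  rw [mateApp_eq_mateEquiv_app]
  exact mateEquiv_counit adj adj' (TwoSquare.mk _ _ _ _ ζ.hom) X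

theorem unit_comp_mateApp_comp_map_inv (Y : D) :
    G.map (adj.unit.app Y) ≫ mateApp adj adj' ζ (L.obj Y) ≫ R'.map (ζ.inv.app Y) =
      adj'.unit.app (G.obj Y) := by
  rw [← Category.assoc, unit_comp_mateApp, Category.assoc, ← R'.map_comp]
  simp

theorem thetaApp_naturality {X Y : C} (f : X ⟶ Y) :
    F.map (L.map (R.map f)) ≫ thetaApp adj adj' ζ Y =
      thetaApp adj adj' ζ X ≫ L'.map (R'.map (F.map f)) := by
  rw [thetaApp, thetaApp, Category.assoc, ← L'.map_comp, ← mateApp_naturality, L'.map_comp]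
  exact ζ.inv.naturality_assoc (R.map f) _

theorem thetaApp_comp_counit (X : C) :
    thetaApp adj adj' ζ X ≫ adj'.counit.app (F.obj X) = F.map (adj.counit.app X) := by
  simp [thetaApp, map_mateApp_comp_counit]

theorem thetaApp_comp_map_unit (X : C) :
    thetaApp adj adj' ζ X ≫ L'.map (adj'.unit.app (R'.obj (F.obj X))) =
      F.map (L.map (adj.unit.app (R.obj X))) ≫ thetaApp adj adj' ζ (L.obj (R.obj X)) ≫
        L'.map (R'.map (thetaApp adj adj' ζ X)) := by
  simp only [thetaApp, Category.assoc, ← L'.map_comp, R'.map_comp]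
  calc ζ.inv.app (R.obj X) ≫ L'.map (mateApp adj adj' ζ X ≫ adj'.unit.app (R'.obj (F.obj X)))
      = ζ.inv.app (R.obj X) ≫ L'.map (adj'.unit.app (G.obj (R.obj X)) ≫
          R'.map (L'.map (mateApp adj adj' ζ X))) := by
        rw [adj'.unit_naturality]
    _ = ζ.inv.app (R.obj X) ≫ L'.map (G.map (adj.unit.app (R.obj X)) ≫
          mateApp adj adj' ζ (L.obj (R.obj X)) ≫ R'.map (ζ.inv.app (R.obj X)) ≫
            R'.map (L'.map (mateApp adj adj' ζ X))) := by
        rw [reassoc_of% unit_comp_mateApp_comp_map_inv adj adj' ζ (R.obj X)]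
    _ = _ := by
        rw [L'.map_comp]
        exact (ζ.inv.naturality_assoc (adj.unit.app (R.obj X)) _).symm

end

/-- for a left loose morphism of adjunctions `(F, G, ζ)`, the pair `(F, θ)` with
`θ := (L'ζ♯) ∘ (ζ⁻¹R)` is a lax morphism of comonads from `(LR, ε, LηR)` to `(L'R', ε', L'η'R')`:
`θ` is natural, compatible with the counits, and compatible with the comultiplications. -/
theorem theta_lax_morphism_of_comonads
    {L : D ⥤ C} {R : C ⥤ D} (adj : L ⊣ R)
    {L' : D' ⥤ C'} {R' : C' ⥤ D'} (adj' : L' ⊣ R')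
    {F : C ⥤ C'} {G : D ⥤ D'} (ζ : G ⋙ L' ≅ L ⋙ F) :
    (∀ {E E' : C} (f : E ⟶ E'),
        F.map (L.map (R.map f)) ≫ thetaApp adj adj' ζ E' =
          thetaApp adj adj' ζ E ≫ L'.map (R'.map (F.map f))) ∧
    (∀ E : C,
        thetaApp adj adj' ζ E ≫ adj'.counit.app (F.obj E) = F.map (adj.counit.app E)) ∧
    (∀ E : C,
        thetaApp adj adj' ζ E ≫ L'.map (adj'.unit.app (R'.obj (F.obj E))) =
          F.map (L.map (adj.unit.app (R.obj E))) ≫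
            thetaApp adj adj' ζ (L.obj (R.obj E)) ≫
              L'.map (R'.map (thetaApp adj adj' ζ E))) := by
  exact ⟨thetaApp_naturality adj adj' ζ, thetaApp_comp_counit adj adj' ζ,
    thetaApp_comp_map_unit adj adj' ζ⟩
end

section
/- In a generalised category with families (u, u̇, Σ ⊣ Δ), every component of the unit η of the adjunction Σ ⊣ Δ is a monomorphism. -/
open CategoryTheory

/-- An arrow `f : X ⟶ Y` in `E` is `p`-cartesian if every `g : Z ⟶ Y` whose image factors
through `p f` lifts uniquely. -/
def IsCartesian {E B : Type*} [Category E] [Category B] (p : E ⥤ B)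
    {X Y : E} (f : X ⟶ Y) : Prop :=
  ∀ ⦃Z : E⦄ (g : Z ⟶ Y) (h : p.obj Z ⟶ p.obj X),
    h ≫ p.map f = p.map g → ∃! l : Z ⟶ X, p.map l = h ∧ l ≫ f = g

/-- A functor `p : E ⥤ B` is a (Grothendieck) fibration if every arrow into the image of an
object of `E` has a cartesian lift. -/
def IsFibration {E B : Type*} [Category E] [Category B] (p : E ⥤ B) : Prop :=
  ∀ (Y : E) (X : B) (φ : X ⟶ p.obj Y),
    ∃ (Z : E) (f : Z ⟶ Y) (e : p.obj Z = X),
      IsCartesian p f ∧ p.map f = eqToHom e ≫ φ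

/-- A generalised category with families: fibrations `u : U ⥤ B` and `ut : Ut ⥤ B`, a cartesian
functor `S` ("Σ") over `B` with a right adjoint `D` ("Δ"), such that the unit of the adjunction
is componentwise `ut`-cartesian and the counit is componentwise `u`-cartesian. -/
structure GCwF (B U Ut : Type*) [Category B] [Category U] [Category Ut] where
  u : U ⥤ B
  ut : Ut ⥤ B
  u_fib : IsFibration u
  ut_fib : IsFibration ut
  S : Ut ⥤ U
  D : U ⥤ Ut
  over' : S ⋙ u = ut
  S_cart : ∀ {a b : Ut} (f : a ⟶ b), IsCartesian ut f → IsCartesian u (S.map f)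
  adj : S ⊣ D
  unit_cart : ∀ a : Ut, IsCartesian ut (adj.unit.app a)
  counit_cart : ∀ A : U, IsCartesian u (adj.counit.app A)

/-!
Applying `u` to the triangle identity `Σ η_a ≫ ε_{Σ a} = 𝟙` shows that `ut η_a = u (Σ η_a)` is a
split mono. A cartesian arrow whose image is a mono is itself a mono, because two arrows with the
same composite and the same image are both the unique lift of that composite.
-/

section Cartesian

variable {E B : Type*} [Category E] [Category B] {p : E ⥤ B}

theorem IsCartesian.eq_of_comp_eq {X Y Z : E} {f : X ⟶ Y} (hf : IsCartesian p f)
    {x y : Z ⟶ X} (hmap : p.map x = p.map y) (hcomp : x ≫ f = y ≫ f) : x = y := by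
  obtain ⟨_, _, hunique⟩ := hf (y ≫ f) (p.map y) (p.map_comp y f).symm
  rw [hunique x ⟨hmap, hcomp⟩, hunique y ⟨rfl, rfl⟩]

theorem IsCartesian.mono_of_mono_map {X Y : E} {f : X ⟶ Y} (hf : IsCartesian p f)
    [Mono (p.map f)] : Mono f where
  right_cancellation x y hxy :=
    hf.eq_of_comp_eq ((cancel_mono (p.map f)).1 (by simp only [← p.map_comp, hxy])) hxy

end Cartesian

theorem CategoryTheory.Functor.mono_map_of_comp_eq {C D B : Type*} [Category C] [Category D]
    [Category B] {F : C ⥤ D} {p : D ⥤ B} {q : C ⥤ B} (h : F ⋙ p = q) {X Y : C} (f : X ⟶ Y)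
    [Mono (p.map (F.map f))] : Mono (q.map f) := by
  subst h
  assumption

theorem CategoryTheory.Adjunction.isSplitMono_map_unit_app {C D : Type*} [Category C]
    [Category D] {F : C ⥤ D} {G : D ⥤ C} (adj : F ⊣ G) (X : C) :
    IsSplitMono (F.map (adj.unit.app X)) :=
  IsSplitMono.mk' ⟨adj.counit.app (F.obj X), adj.left_triangle_components X⟩

/-- in a generalised category with families, every component of the unit of the
adjunction `Σ ⊣ Δ` is a monomorphism. -/
theorem gcwf_unit_mono {B U Ut : Type*} [Category B] [Category U] [Category Ut]
    (G : GCwF B U Ut) (a : Ut) : Mono (G.adj.unit.app a) := by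
  have := G.adj.isSplitMono_map_unit_app a
  have := Functor.mono_map_of_comp_eq G.over' (G.adj.unit.app a)
  exact (G.unit_cart a).mono_of_mono_map
end

section
/- For a weakening and contraction comonad (K,ε,ν) on a fibration p : E → B: (i) the functor K preserves p-cartesian arrows, and (ii) the structure map of any K-coalgebra is p-cartesian. -/
open CategoryTheory

/-!
Both parts are instances of cancellation: if `f ≫ g` and `g` are cartesian, so is `f`.
By naturality `K.map f ≫ ε A' = ε A ≫ f`, a composite of cartesian arrows, and for a coalgebra
`a ≫ ε A = 𝟙 A`; in both cases cancel the cartesian counit component.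
-/

namespace IsCartesian

variable {E B : Type*} [Category E] [Category B] {p : E ⥤ B}

lemma hom_ext {W X Y : E} {f : X ⟶ Y} (hf : IsCartesian p f) {l l' : W ⟶ X}
    (hpl : p.map l = p.map l') (hl : l ≫ f = l' ≫ f) : l = l' := by
  obtain ⟨m, _, hm⟩ := hf (l' ≫ f) (p.map l') (p.map_comp l' f).symm
  exact (hm l ⟨hpl, hl⟩).trans (hm l' ⟨rfl, rfl⟩).symm

variable (p) in
lemma id (X : E) : IsCartesian p (𝟙 X) := by
  intro W t h hh
  rw [p.map_id, Category.comp_id] at hh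
  exact ⟨t, ⟨hh.symm, Category.comp_id t⟩, fun l hl => by simpa using hl.2⟩

lemma comp {X Y Z : E} {f : X ⟶ Y} {g : Y ⟶ Z} (hf : IsCartesian p f) (hg : IsCartesian p g) :
    IsCartesian p (f ≫ g) := by
  intro W t h hh
  rw [p.map_comp, ← Category.assoc] at hh
  obtain ⟨m, ⟨hm, hmg⟩, -⟩ := hg t (h ≫ p.map f) hh
  obtain ⟨l, ⟨hl, hlf⟩, -⟩ := hf m h hm.symm
  refine ⟨l, ⟨hl, by rw [← Category.assoc, hlf, hmg]⟩, fun l' ⟨hl', hl'fg⟩ => ?_⟩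
  have hl'f : l' ≫ f = m :=
    hg.hom_ext (by rw [p.map_comp, hl', hm]) (by rw [Category.assoc, hl'fg, hmg])
  exact hf.hom_ext (hl'.trans hl.symm) (hl'f.trans hlf.symm)

lemma of_comp {X Y Z : E} {f : X ⟶ Y} {g : Y ⟶ Z} (hfg : IsCartesian p (f ≫ g))
    (hg : IsCartesian p g) : IsCartesian p f := by
  intro W t h hh
  have hhg : h ≫ p.map (f ≫ g) = p.map (t ≫ g) := by
    rw [p.map_comp, p.map_comp, ← Category.assoc, hh]
  obtain ⟨l, ⟨hl, hlfg⟩, -⟩ := hfg (t ≫ g) h hhg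
  have hlf : l ≫ f = t :=
    hg.hom_ext (by rw [p.map_comp, hl, hh]) (by rw [Category.assoc, hlfg])
  refine ⟨l, ⟨hl, hlf⟩, fun l' ⟨hl', hl'f⟩ => ?_⟩
  exact hfg.hom_ext (hl'.trans hl.symm) (by rw [← Category.assoc, ← Category.assoc, hl'f, hlf])

end IsCartesian

lemma Functor.map_isCartesian_of_isCartesian_app {E B : Type*} [Category E] [Category B]
    {p : E ⥤ B} {F : E ⥤ E} (ε : F ⟶ 𝟭 E) (hε : ∀ A : E, IsCartesian p (ε.app A))
    {A A' : E} {f : A ⟶ A'} (hf : IsCartesian p f) : IsCartesian p (F.map f) :=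
  IsCartesian.of_comp (by rw [ε.naturality]; exact (hε A).comp hf) (hε A')

lemma Comonad.Coalgebra.isCartesian_a {E B : Type*} [Category E] [Category B]
    {p : E ⥤ B} {K : Comonad E} (hε : ∀ A : E, IsCartesian p (K.ε.app A))
    (X : K.Coalgebra) : IsCartesian p X.a :=
  IsCartesian.of_comp (by rw [X.counit]; exact IsCartesian.id p X.A) (hε X.A)

theorem wccmd_preserves_cartesian_and_coalgebras_cartesian_general
    {E B : Type*} [Category E] [Category B] (p : E ⥤ B)
    (K : Comonad E)
    (hε : ∀ A : E, IsCartesian p (K.ε.app A)) :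
    (∀ {A A' : E} (f : A ⟶ A'), IsCartesian p f → IsCartesian p ((K : E ⥤ E).map f)) ∧
    (∀ X : K.Coalgebra, IsCartesian p X.a) :=
  ⟨fun _ hf => Functor.map_isCartesian_of_isCartesian_app K.ε hε hf,
    Comonad.Coalgebra.isCartesian_a hε⟩

/-- for a weakening and contraction comonad `(K, ε, ν)` on a fibration `p`:
(i) `K` preserves `p`-cartesian arrows, and (ii) the structure map of any `K`-coalgebra is
`p`-cartesian. -/
theorem wccmd_preserves_cartesian_and_coalgebras_cartesian
    {E B : Type*} [Category E] [Category B] (p : E ⥤ B) (hp : IsFibration p)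
    (K : Comonad E)
    (hε : ∀ A : E, IsCartesian p (K.ε.app A))
    (hpb : ∀ {A A' : E} (f : A ⟶ A'), IsCartesian p f →
      IsPullback (p.map (K.ε.app A)) (p.map ((K : E ⥤ E).map f)) (p.map f)
        (p.map (K.ε.app A'))) :
    (∀ {A A' : E} (f : A ⟶ A'), IsCartesian p f → IsCartesian p ((K : E ⥤ E).map f)) ∧
    (∀ X : K.Coalgebra, IsCartesian p X.a) :=
  wccmd_preserves_cartesian_and_coalgebras_cartesian_general p K hε
end
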